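/- arXiv:2312.01386 — 2 statements merged into one kernel-verified Lean document; each statement's English description precedes it below -/
import Mathlib

section
/- The Matérn kernel Ψ with smoothness parameter ν > 0 satisfies Ψ(0) − Ψ(x − x') ≤ A₀ ‖x − x'‖₂^{min(ν,1)} for some constant A₀ > 0 and all x, x' ∈ ℝᵈ. -/
/-!
Writing `Ψ(0) − Ψ(h)` as the integral of `(1 − cos⟪h, ω⟫)` against the nonnegative spectral
density `f`, the elementary bound `1 − cos t ≤ 2 |t|^θ` (valid for `0 ≤ θ ≤ 2`) together with
`|⟪h, ω⟫| ≤ ‖h‖ ‖ω‖` gives `Ψ(0) − Ψ(h) ≤ 2 ‖h‖^θ ∫ ‖ω‖^θ f(ω) dω`. For the Matérn density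
`f(ω) ∝ (2ν/ℓ² + ‖ω‖²)^{−(ν + d/2)}` this moment is finite as soon as `θ < 2ν`, in particular
for `θ = min ν 1`.
-/

open MeasureTheory Module Real

lemma one_sub_cos_le_two_mul_abs_rpow {θ : ℝ} (hθ0 : 0 ≤ θ) (hθ2 : θ ≤ 2) (t : ℝ) :
    1 - cos t ≤ 2 * |t| ^ θ := by
  rcases le_total |t| 1 with ht | ht
  · have hquad : 1 - cos t ≤ |t| ^ (2 : ℝ) / 2 := by
      rw [rpow_two, sq_abs]
      linarith [one_sub_sq_div_two_le_cos (x := t)]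
    have hpow : |t| ^ (2 : ℝ) ≤ |t| ^ θ :=
      rpow_le_rpow_of_exponent_ge' (abs_nonneg t) ht hθ0 hθ2
    linarith [rpow_nonneg (abs_nonneg t) θ]
  · linarith [one_le_rpow ht hθ0, neg_one_le_cos t]

lemma rpow_le_add_sq_rpow_half {a t θ : ℝ} (ha : 0 ≤ a) (ht : 0 ≤ t) (hθ : 0 ≤ θ) :
    t ^ θ ≤ (a + t ^ 2) ^ (θ / 2) := by
  calc t ^ θ = (t ^ 2) ^ (θ / 2) := by
        rw [← rpow_natCast, ← rpow_mul ht]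
        congr 1; push_cast; ring
    _ ≤ (a + t ^ 2) ^ (θ / 2) := by gcongr; linarith

section Integrability

variable {E : Type*} [NormedAddCommGroup E] [InnerProductSpace ℝ E] [FiniteDimensional ℝ E]
  [MeasurableSpace E] [BorelSpace E] {μ : Measure E} [μ.IsAddHaarMeasure]

lemma integrable_add_norm_sq_rpow_neg {a s : ℝ} (ha : 0 < a) (hs : (finrank ℝ E : ℝ) < 2 * s) :
    Integrable (fun x : E ↦ (a + ‖x‖ ^ 2) ^ (-s)) μ := by
  have hm : 0 < min a 1 := lt_min ha one_pos
  have hs0 : 0 ≤ s := by linarith [(finrank ℝ E).cast_nonneg (α := ℝ)]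
  have hint : Integrable (fun x : E ↦ ((1 : ℝ) + ‖x‖ ^ 2) ^ (-s)) μ := by
    simpa [neg_div] using integrable_rpow_neg_one_add_norm_sq (μ := μ) hs
  refine (hint.const_mul (min a 1 ^ (-s))).mono' (Measurable.aestronglyMeasurable (by fun_prop))
    (Filter.Eventually.of_forall fun x ↦ ?_)
  have hscale : min a 1 * (1 + ‖x‖ ^ 2) ≤ a + ‖x‖ ^ 2 := by
    nlinarith [min_le_left a 1, min_le_right a 1, sq_nonneg ‖x‖]
  rw [norm_of_nonneg (by positivity), ← mul_rpow hm.le (by positivity)]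
  exact rpow_le_rpow_of_nonpos (by positivity) hscale (neg_nonpos.mpr hs0)

lemma integrable_norm_rpow_mul_add_norm_sq_rpow_neg {a s θ : ℝ} (ha : 0 < a) (hθ : 0 ≤ θ)
    (hs : (finrank ℝ E : ℝ) < 2 * s - θ) :
    Integrable (fun x : E ↦ ‖x‖ ^ θ * (a + ‖x‖ ^ 2) ^ (-s)) μ := by
  refine (integrable_add_norm_sq_rpow_neg (μ := μ) (s := s - θ / 2) ha (by linarith)).mono'
    (Measurable.aestronglyMeasurable (by fun_prop)) (Filter.Eventually.of_forall fun x ↦ ?_)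
  have hbase : 0 < a + ‖x‖ ^ 2 := by positivity
  rw [norm_of_nonneg (by positivity), show -(s - θ / 2) = θ / 2 + -s by ring,
    rpow_add hbase]
  gcongr
  exact rpow_le_add_sq_rpow_half ha.le (norm_nonneg x) hθ

end Integrability

lemma integral_sub_integral_cos_inner_mul_le {E : Type*} [NormedAddCommGroup E]
    [InnerProductSpace ℝ E] [MeasurableSpace E] [OpensMeasurableSpace E] {μ : Measure E}
    {f : E → ℝ} {θ : ℝ} (hθ0 : 0 ≤ θ) (hθ2 : θ ≤ 2) (hf0 : 0 ≤ f) (hf : Integrable f μ)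
    (hfθ : Integrable (fun ω ↦ ‖ω‖ ^ θ * f ω) μ) (h : E) :
    ∫ ω, f ω ∂μ - ∫ ω, cos (inner ℝ h ω) * f ω ∂μ ≤ 2 * ‖h‖ ^ θ * ∫ ω, ‖ω‖ ^ θ * f ω ∂μ := by
  have hcos : Integrable (fun ω ↦ cos (inner ℝ h ω) * f ω) μ :=
    hf.bdd_mul (by fun_prop) (Filter.Eventually.of_forall fun ω ↦ abs_cos_le_one _)
  rw [← integral_sub hf hcos, ← integral_const_mul]
  refine integral_mono (hf.sub hcos) (hfθ.const_mul _) fun ω ↦ ?_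
  have hinner : |inner ℝ h ω| ^ θ ≤ ‖h‖ ^ θ * ‖ω‖ ^ θ := by
    rw [← mul_rpow (norm_nonneg h) (norm_nonneg ω)]
    exact rpow_le_rpow (abs_nonneg _) (abs_real_inner_le_norm h ω) hθ0
  calc f ω - cos (inner ℝ h ω) * f ω = (1 - cos (inner ℝ h ω)) * f ω := by ring
    _ ≤ 2 * |inner ℝ h ω| ^ θ * f ω := by
        gcongr
        · exact hf0 ω
        · exact one_sub_cos_le_two_mul_abs_rpow hθ0 hθ2 _
    _ ≤ 2 * (‖h‖ ^ θ * ‖ω‖ ^ θ) * f ω := by gcongr; exact hf0 ω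
    _ = 2 * ‖h‖ ^ θ * (‖ω‖ ^ θ * f ω) := by ring

theorem stmt_11_general (d : ℕ) (ν ℓ C : ℝ) (hν : 0 < ν) (hℓ : 0 < ℓ) (hC : 0 < C)
    (Ψ : EuclideanSpace ℝ (Fin d) → ℝ)
    (hΨ : ∀ h : EuclideanSpace ℝ (Fin d),
      Ψ h = (2 * Real.pi) ^ (-(d : ℝ) / 2) *
        ∫ ω : EuclideanSpace ℝ (Fin d),
          Real.cos (inner ℝ h ω) * (C * (2 * ν / ℓ ^ 2 + ‖ω‖ ^ 2) ^ (-(ν + (d : ℝ) / 2)))) :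
    ∃ A₀ : ℝ, 0 < A₀ ∧ ∀ x x' : EuclideanSpace ℝ (Fin d),
      Ψ 0 - Ψ (x - x') ≤ A₀ * ‖x - x'‖ ^ (min ν 1) := by
  set θ := min ν 1
  have hθ0 : 0 ≤ θ := (lt_min hν one_pos).le
  have hθ2 : θ ≤ 2 := (min_le_right ν 1).trans one_le_two
  have ha : 0 < 2 * ν / ℓ ^ 2 := by positivity
  have hdim : ((finrank ℝ (EuclideanSpace ℝ (Fin d)) : ℕ) : ℝ) < 2 * (ν + d / 2) - θ := by
    rw [finrank_euclideanSpace_fin]; linarith [min_le_left ν 1]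
  set f := fun ω : EuclideanSpace ℝ (Fin d) ↦ C * (2 * ν / ℓ ^ 2 + ‖ω‖ ^ 2) ^ (-(ν + d / 2))
  have hf0 : 0 ≤ f := fun ω ↦ by positivity
  have hf : Integrable f := (integrable_add_norm_sq_rpow_neg ha (by linarith)).const_mul C
  have hfθ : Integrable (fun ω ↦ ‖ω‖ ^ θ * f ω) := by
    simpa only [f, mul_left_comm] using
      (integrable_norm_rpow_mul_add_norm_sq_rpow_neg ha hθ0 hdim).const_mul C
  set c := (2 * π) ^ (-(d : ℝ) / 2)
  set I := ∫ ω, ‖ω‖ ^ θ * f ω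
  have hI : 0 ≤ I := integral_nonneg fun ω ↦ mul_nonneg (by positivity) (hf0 ω)
  -- the `+ 1` spares proving `0 < I`
  refine ⟨2 * c * I + 1, by positivity, fun x x' ↦ ?_⟩
  have hbound := integral_sub_integral_cos_inner_mul_le hθ0 hθ2 hf0 hf hfθ (x - x')
  calc Ψ 0 - Ψ (x - x') = c * ((∫ ω, f ω) - ∫ ω, cos (inner ℝ (x - x') ω) * f ω) := by
        simp only [hΨ, inner_zero_left, cos_zero, one_mul, f, c]; ring
    _ ≤ c * (2 * ‖x - x'‖ ^ θ * I) := by gcongr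
    _ ≤ (2 * c * I + 1) * ‖x - x'‖ ^ θ := by nlinarith [rpow_nonneg (norm_nonneg (x - x')) θ]

/-- The Matérn kernel `Ψ` with smoothness `ν`, expressed through its spectral (Fourier)
representation `Ψ(h) = (2π)^{-d/2} ∫ cos(⟪h,ω⟫) F[Ψ](ω) dω` with Matérn spectral density
`F[Ψ](ω) = C (2ν/ℓ² + ‖ω‖²)^{-(ν+d/2)}`, is Hölder continuous of order `min ν 1`:
`Ψ(0) − Ψ(x−x') ≤ A₀ ‖x−x'‖^{min ν 1}`. -/
theorem stmt_11 (d : ℕ) (hd : 1 ≤ d) (ν ℓ C : ℝ) (hν : 0 < ν) (hℓ : 0 < ℓ) (hC : 0 < C)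
    (Ψ : EuclideanSpace ℝ (Fin d) → ℝ)
    (hΨ : ∀ h : EuclideanSpace ℝ (Fin d),
      Ψ h = (2 * Real.pi) ^ (-(d : ℝ) / 2) *
        ∫ ω : EuclideanSpace ℝ (Fin d),
          Real.cos (inner ℝ h ω) * (C * (2 * ν / ℓ ^ 2 + ‖ω‖ ^ 2) ^ (-(ν + (d : ℝ) / 2)))) :
    ∃ A₀ : ℝ, 0 < A₀ ∧ ∀ x x' : EuclideanSpace ℝ (Fin d),
      Ψ 0 - Ψ (x - x') ≤ A₀ * ‖x - x'‖ ^ (min ν 1) :=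
  stmt_11_general d ν ℓ C hν hℓ hC Ψ hΨ
end

section
/- Suppose that for every t ≥ 0 and all x in a domain D, |f(x) − μ_t(x)| ≤ β_t^{1/2} σ_t(x), where β_t > 0 is nondecreasing in t, and suppose x_{t+1} maximizes μ_t(x) + β_t^{1/2} σ_t(x) over D. Then for any maximizer x* of f, f(x*) − f(x_{t+1}) ≤ 2 β_t^{1/2} σ_t(x_{t+1}) for all t ≥ 0, and hence ∑_{t=1}^T (f(x*) − f(x_t)) ≤ 2 √(T β_T ∑_{t=1}^T σ_{t−1}²(x_t)). -/
/-! The confidence band `|f - μ_t| ≤ √β_t σ_t` bounds `f(y)`, for any point `y`, by the UCB value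
at `y`, which the UCB choice `x_{t+1}` dominates, and bounds `f(x_{t+1})` from below by the lower
confidence value there; the gap between the two is the width `2√β_t σ_t(x_{t+1})`.
Summing, with `β_{t-1} ≤ β_T` and Cauchy–Schwarz `∑ σ ≤ √(T ∑ σ²)`, gives the cumulative bound. -/

open Finset

theorem sub_le_two_mul_width_of_isMax_ucb {D : Type*} {f μ w : D → ℝ}
    (hband : ∀ y, |f y - μ y| ≤ w y) {x : D} (hx : ∀ y, μ y + w y ≤ μ x + w x) (y : D) :
    f y - f x ≤ 2 * w x := by
  have hy := (abs_le.mp (hband y)).2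
  have hx' := (abs_le.mp (hband x)).1
  linarith [hx y]

theorem sum_le_sqrt_card_mul_sum_sq {ι : Type*} (s : Finset ι) (a : ι → ℝ) :
    ∑ i ∈ s, a i ≤ √(#s * ∑ i ∈ s, a i ^ 2) :=
  Real.le_sqrt_of_sq_le (sq_sum_le_card_mul_sum_sq)

theorem stmt_17_general {D : Type*} (f : D → ℝ) (μt σt : ℕ → D → ℝ) (β : ℕ → ℝ) (xs : ℕ → D)
    (xstar : D)
    (hσ : ∀ t y, 0 ≤ σt t y)
    (hβmono : Monotone β)
    (herr : ∀ (t : ℕ) (y : D), |f y - μt t y| ≤ Real.sqrt (β t) * σt t y)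
    (hsel : ∀ (t : ℕ) (y : D),
      μt t y + Real.sqrt (β t) * σt t y ≤ μt t (xs (t+1)) + Real.sqrt (β t) * σt t (xs (t+1))) :
    (∀ t : ℕ, f xstar - f (xs (t+1)) ≤ 2 * Real.sqrt (β t) * σt t (xs (t+1))) ∧
    (∀ T : ℕ, 1 ≤ T →
      ∑ t ∈ Finset.Icc 1 T, (f xstar - f (xs t))
        ≤ 2 * Real.sqrt (T * β T * ∑ t ∈ Finset.Icc 1 T, (σt (t-1) (xs t)) ^ 2)) := by
  have instant (t : ℕ) : f xstar - f (xs (t+1)) ≤ 2 * √(β t) * σt t (xs (t+1)) := by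
    rw [mul_assoc]
    exact sub_le_two_mul_width_of_isMax_ucb (herr t) (hsel t) xstar
  refine ⟨instant, fun T _ => ?_⟩
  have term_le (t : ℕ) (ht : t ∈ Icc 1 T) :
      f xstar - f (xs t) ≤ 2 * √(β T) * σt (t-1) (xs t) := by
    obtain ⟨h1, hT⟩ := mem_Icc.mp ht
    obtain ⟨s, rfl⟩ : ∃ s, t = s + 1 := ⟨t - 1, by omega⟩
    have hβ : β s ≤ β T := hβmono (by omega)
    calc f xstar - f (xs (s+1)) ≤ 2 * √(β s) * σt s (xs (s+1)) := instant s
      _ ≤ 2 * √(β T) * σt (s+1-1) (xs (s+1)) := by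
        rw [Nat.add_sub_cancel]; gcongr; exact hσ _ _
  have hcard : (#(Icc 1 T) : ℝ) = T := by simp
  calc ∑ t ∈ Icc 1 T, (f xstar - f (xs t))
      ≤ ∑ t ∈ Icc 1 T, 2 * √(β T) * σt (t-1) (xs t) := sum_le_sum term_le
    _ = 2 * √(β T) * ∑ t ∈ Icc 1 T, σt (t-1) (xs t) := by rw [mul_sum]
    _ ≤ 2 * √(β T) * √(T * ∑ t ∈ Icc 1 T, σt (t-1) (xs t) ^ 2) := by
        rw [← hcard]; gcongr; exact sum_le_sqrt_card_mul_sum_sq _ _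
    _ = 2 * √(T * β T * ∑ t ∈ Icc 1 T, σt (t-1) (xs t) ^ 2) := by
        rw [mul_assoc 2, ← Real.sqrt_mul' _ (by positivity)]
        ring_nf

theorem stmt_17 {D : Type*} (f : D → ℝ) (μt σt : ℕ → D → ℝ) (β : ℕ → ℝ) (xs : ℕ → D)
    (xstar : D)
    (hσ : ∀ t y, 0 ≤ σt t y)
    (hβpos : ∀ t, 0 < β t) (hβmono : Monotone β)
    (herr : ∀ (t : ℕ) (y : D), |f y - μt t y| ≤ Real.sqrt (β t) * σt t y)
    (hsel : ∀ (t : ℕ) (y : D),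
      μt t y + Real.sqrt (β t) * σt t y ≤ μt t (xs (t+1)) + Real.sqrt (β t) * σt t (xs (t+1)))
    (hstar : ∀ y, f y ≤ f xstar) :
    (∀ t : ℕ, f xstar - f (xs (t+1)) ≤ 2 * Real.sqrt (β t) * σt t (xs (t+1))) ∧
    (∀ T : ℕ, 1 ≤ T →
      ∑ t ∈ Finset.Icc 1 T, (f xstar - f (xs t))
        ≤ 2 * Real.sqrt (T * β T * ∑ t ∈ Finset.Icc 1 T, (σt (t-1) (xs t)) ^ 2)) :=
  stmt_17_general f μt σt β xs xstar hσ hβmono herr hsel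
end
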